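/- (Zero set of a star product) For slice regular functions f, g on B_R ⊂ ℍ: ⋃_{α ∈ V(f*g)} S_α = ⋃_{α ∈ V(f) ∪ V(g)} S_α. In particular, V(f*g) ⊆ ⋃_{α ∈ V(f) ∪ V(g)} S_α, and every zero of f*g is conjugate to a zero of f or of g. -/

import Mathlib

noncomputable section

/-- The real quaternions. -/
abbrev Quat := Quaternion ℝ

/-- Evaluation of a quaternionic power series with right coefficients `a` at `q`:
`f(q) = Σᵢ qⁱ aᵢ` (the sum is `0` by convention if the series does not converge). -/
def pev (a : ℕ → Quat) (q : Quat) : Quat := ∑' i, q ^ i * a i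

/-- The power series with coefficients `a` converges on the open ball of radius `R`. -/
def ConvOn (a : ℕ → Quat) (R : ℝ) : Prop :=
  ∀ q : Quat, ‖q‖ < R → Summable fun i => q ^ i * a i

/-- Coefficients of the star product `f * g` (convolution of coefficients). -/
def scoef (a b : ℕ → Quat) : ℕ → Quat :=
  fun k => ∑ p ∈ Finset.HasAntidiagonal.antidiagonal k, a p.1 * b p.2

/-- Coefficients of the conjugate series `conj f`. -/
def cconj (a : ℕ → Quat) : ℕ → Quat := fun i => star (a i)

/-- Coefficients of the normal (symmetrized) series `N(f) = f * conj f`. -/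
def Ncoef (a : ℕ → Quat) : ℕ → Quat := scoef a (cconj a)

/-- The conjugacy class of `α`: quaternions with the same trace and the same norm. -/
def Sset (α : Quat) : Set Quat := {x | x + star x = α + star α ∧ ‖x‖ = ‖α‖}

/-- The characteristic polynomial of `α`, evaluated at `q`:
`Δ_α(q) = q² - q·tr(α) + |α|²`. -/
def Δev (α q : Quat) : Quat := q ^ 2 - q * (α + star α) + algebraMap ℝ Quat (‖α‖ ^ 2)

/-- Coefficients of the linear polynomial `w - α`. -/
def lin (α : Quat) : ℕ → Quat := fun k => if k = 0 then -α else if k = 1 then 1 else 0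

/-- Zero set of the series `a` in the ball of radius `R`. -/
def Vset (a : ℕ → Quat) (R : ℝ) : Set Quat := {q | ‖q‖ < R ∧ pev a q = 0}

/-!
Absolute convergence turns the Cauchy product into `(f * g)(q) = Σⱼ qʲ f(q) bⱼ`, so
`(f * g)(q) = f(q) g(p)` whenever `q f(q) = f(q) p`. For a zero `β` of `f * g` with `f(β) ≠ 0`
this makes `f(β)⁻¹ β f(β) ∈ S_β` a zero of `g`. Conversely, on the sphere `S_γ` of a non-real `γ`
one has `f(q) = A + q B` (reduce `qⁱ` modulo `Δ_γ`); a `q ∈ S_γ` with `q P = P γ`, where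
`P = A + B γ̄`, then satisfies `q f(q) = f(q) γ`, so `(f * g)(q) = f(q) g(γ)` and every zero of `g`
yields a zero of `f * g` on the same sphere.
-/

open Finset

theorem Quaternion.re_mul_comm {R : Type*} [CommRing R] (a b : Quaternion R) :
    (a * b).re = (b * a).re := by
  simp only [Quaternion.re_mul]; ring

section ConjugacyClass

theorem mem_Sset_iff {x α : Quat} : x ∈ Sset α ↔ x.re = α.re ∧ ‖x‖ = ‖α‖ := by
  rw [Sset, Set.mem_ofPred_eq, Quaternion.self_add_star', Quaternion.self_add_star',
    Quaternion.coe_inj, mul_right_inj' two_ne_zero]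

theorem mem_Sset_self (α : Quat) : α ∈ Sset α := ⟨rfl, rfl⟩

theorem mem_Sset_comm {x α : Quat} : x ∈ Sset α ↔ α ∈ Sset x :=
  ⟨fun h => ⟨h.1.symm, h.2.symm⟩, fun h => ⟨h.1.symm, h.2.symm⟩⟩

theorem Sset_eq_of_mem {x α : Quat} (h : x ∈ Sset α) : Sset x = Sset α := by
  ext y
  exact ⟨fun hy => ⟨hy.1.trans h.1, hy.2.trans h.2⟩,
    fun hy => ⟨hy.1.trans h.1.symm, hy.2.trans h.2.symm⟩⟩

theorem star_mem_Sset (α : Quat) : star α ∈ Sset α :=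
  mem_Sset_iff.mpr ⟨Quaternion.re_star α, norm_star α⟩

theorem mul_mul_inv_mem_Sset {c : Quat} (hc : c ≠ 0) (x : Quat) : c * x * c⁻¹ ∈ Sset x := by
  refine mem_Sset_iff.mpr ⟨?_, ?_⟩
  · rw [Quaternion.re_mul_comm, ← mul_assoc, inv_mul_cancel₀ hc, one_mul]
  · rw [norm_mul, norm_mul, norm_inv, mul_comm, ← mul_assoc,
      inv_mul_cancel₀ (norm_ne_zero_iff.mpr hc), one_mul]

theorem exists_mem_Sset_semiconjBy (B x : Quat) : ∃ q ∈ Sset x, SemiconjBy B x q := by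
  rcases eq_or_ne B 0 with rfl | hB
  · exact ⟨x, mem_Sset_self x, by simp [SemiconjBy]⟩
  · exact ⟨B * x * B⁻¹, mul_mul_inv_mem_Sset hB x, by rw [SemiconjBy, inv_mul_cancel_right₀ hB]⟩

theorem biUnion_Sset_subset {s t : Set Quat} (h : ∀ α ∈ s, ∃ β ∈ t, α ∈ Sset β) :
    ⋃ α ∈ s, Sset α ⊆ ⋃ β ∈ t, Sset β := by
  simp only [Set.iUnion_subset_iff]
  intro α hα x hx
  obtain ⟨β, hβ, hαβ⟩ := h α hα
  exact Set.mem_biUnion hβ (Sset_eq_of_mem hαβ ▸ hx)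

theorem Δev_eq_zero_of_mem_Sset {α q : Quat} (h : q ∈ Sset α) : Δev α q = 0 := by
  rw [Δev, ← h.1, ← h.2, mul_add, ← sq, Quaternion.self_mul_star,
    Quaternion.normSq_eq_norm_mul_self, Quaternion.algebraMap_def, ← sq]
  abel

end ConjugacyClass

section Representation

/-- `Xⁱ ≡ c + d X` modulo `Δ_α = X² - 2 Re(α) X + ‖α‖²`, with `(c, d) = powModΔ α i`. -/
def powModΔ (α : Quat) : ℕ → ℝ × ℝ
  | 0 => (1, 0)
  | i + 1 => (-‖α‖ ^ 2 * (powModΔ α i).2, (powModΔ α i).1 + 2 * α.re * (powModΔ α i).2)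

theorem pow_eq_of_Δev_eq_zero {α q : Quat} (h : Δev α q = 0) (i : ℕ) :
    q ^ i = (powModΔ α i).1 • 1 + (powModΔ α i).2 • q := by
  have hsq : q ^ 2 = (2 * α.re) • q - ‖α‖ ^ 2 • 1 := by
    rw [Δev, Quaternion.self_add_star', Quaternion.mul_coe_eq_smul,
      Algebra.algebraMap_eq_smul_one] at h
    rw [← sub_eq_zero, ← h]; abel
  induction i with
  | zero => simp [powModΔ]
  | succ i ih =>
    rw [pow_succ, ih, add_mul, smul_mul_assoc, smul_mul_assoc, one_mul, ← sq, hsq]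
    simp only [powModΔ]
    module

theorem pow_mul_eq_of_mem_Sset {α q : Quat} (h : q ∈ Sset α) (i : ℕ) (a : Quat) :
    q ^ i * a = (powModΔ α i).1 • a + q * ((powModΔ α i).2 • a) := by
  rw [pow_eq_of_Δev_eq_zero (Δev_eq_zero_of_mem_Sset h), add_mul, smul_mul_assoc, one_mul,
    smul_mul_assoc, mul_smul_comm]

theorem ConvOn.exists_pev_eq_add_mul {a : ℕ → Quat} {R : ℝ} (ha : ConvOn a R) {α : Quat}
    (hα : ‖α‖ < R) (hreal : star α ≠ α) :
    ∃ A B : Quat, ∀ q ∈ Sset α, pev a q = A + q * B := by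
  set c := fun i => (powModΔ α i).1
  set d := fun i => (powModΔ α i).2
  -- comparing the expansions at `α` and `star α` isolates the `d`-series
  have hd : Summable fun i => d i • a i := by
    have hsub : ∀ i, d i • a i = (α - star α)⁻¹ * (α ^ i * a i - star α ^ i * a i) := fun i => by
      rw [pow_mul_eq_of_mem_Sset (mem_Sset_self α), pow_mul_eq_of_mem_Sset (star_mem_Sset α),
        add_sub_add_left_eq_sub, ← sub_mul, inv_mul_cancel_left₀ (sub_ne_zero.mpr hreal.symm)]
    refine Summable.congr (((ha α hα).sub (ha _ ?_)).mul_left _) fun i => (hsub i).symm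
    rwa [norm_star]
  have hc : Summable fun i => c i • a i := by
    have hsub : ∀ i, c i • a i = α ^ i * a i - α * (d i • a i) := fun i => by
      rw [pow_mul_eq_of_mem_Sset (mem_Sset_self α), add_sub_cancel_right]
    exact Summable.congr ((ha α hα).sub (hd.mul_left α)) fun i => (hsub i).symm
  refine ⟨∑' i, c i • a i, ∑' i, d i • a i, fun q hq => ?_⟩
  rw [pev, tsum_congr fun i => pow_mul_eq_of_mem_Sset hq i (a i), hc.tsum_add (hd.mul_left q),
    tsum_mul_left]

end Representation

section StarProduct

theorem Summable.tsum_sum_antidiagonal_eq_tsum {A E : Type*} [AddCommMonoid A]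
    [HasAntidiagonal A] [AddCommGroup E] [UniformSpace E] [IsUniformAddGroup E] [CompleteSpace E]
    [T0Space E] {h : A × A → E} (hh : Summable h) :
    ∑' n, ∑ p ∈ antidiagonal n, h p = ∑' p, h p := by
  rw [← HasAntidiagonal.sigmaAntidiagonalEquivProd.tsum_eq h]
  refine Eq.trans ?_
    (HasAntidiagonal.sigmaAntidiagonalEquivProd.summable_iff.mpr hh).tsum_sigma.symm
  exact tsum_congr fun n => (Finset.tsum_subtype _ _).symm

theorem ConvOn.summable_norm_pow_mul_norm {a : ℕ → Quat} {R : ℝ} (ha : ConvOn a R) {q : Quat}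
    (hq : ‖q‖ < R) : Summable fun i => ‖q‖ ^ i * ‖a i‖ := by
  have h := summable_norm_iff.mpr (ha (‖q‖ : Quat) (by rwa [Quaternion.norm_coe, norm_norm]))
  refine h.congr fun i => ?_
  rw [norm_mul, norm_pow, Quaternion.norm_coe, norm_norm]

variable {f g : ℕ → Quat} {R : ℝ}

theorem pev_scoef (hf : ConvOn f R) (hg : ConvOn g R) {q : Quat} (hq : ‖q‖ < R) :
    pev (scoef f g) q = ∑' j, q ^ j * pev f q * g j := by
  set h : ℕ → ℕ → Quat := fun i j => q ^ (i + j) * (f i * g j)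
  have hh : Summable (Function.uncurry h) := by
    refine Summable.of_norm_bounded
      ((hf.summable_norm_pow_mul_norm hq).mul_of_nonneg (hg.summable_norm_pow_mul_norm hq)
        (fun _ => by positivity) fun _ => by positivity) fun p => ?_
    simp only [Function.uncurry, h, norm_mul, norm_pow, pow_add]
    exact le_of_eq (by ring)
  calc pev (scoef f g) q = ∑' n, ∑ p ∈ antidiagonal n, Function.uncurry h p := by
        refine tsum_congr fun n => ?_
        rw [scoef, mul_sum]
        exact sum_congr rfl fun p hp => by rw [← mem_antidiagonal.mp hp]; rfl
    _ = ∑' j, ∑' i, h i j := by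
        rw [hh.tsum_sum_antidiagonal_eq_tsum, hh.tsum_prod, hh.tsum_comm]; rfl
    _ = ∑' j, q ^ j * pev f q * g j := by
        refine tsum_congr fun j => ?_
        rw [pev, mul_assoc, ← tsum_mul_right, ← tsum_mul_left]
        refine tsum_congr fun i => ?_
        simp only [h]
        rw [add_comm, pow_add]
        simp only [mul_assoc]

theorem pev_scoef_of_semiconjBy (hf : ConvOn f R) (hg : ConvOn g R) {q p : Quat} (hq : ‖q‖ < R)
    (hqp : SemiconjBy (pev f q) p q) : pev (scoef f g) q = pev f q * pev g p := by
  rw [pev_scoef hf hg hq, show pev g p = ∑' j, p ^ j * g j from rfl, ← tsum_mul_left]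
  exact tsum_congr fun j => by rw [← (hqp.pow_right j).eq, mul_assoc]

end StarProduct

section Zeros

theorem semiconjBy_add_mul_of_mem_Sset {γ q A B : Quat} (hq : q ∈ Sset γ)
    (h : SemiconjBy (A + B * star γ) γ q) : SemiconjBy (A + q * B) γ q := by
  have hsq : q * q = (2 * γ.re) • q - ‖γ‖ ^ 2 • 1 := by
    rw [← sq, pow_eq_of_Δev_eq_zero (Δev_eq_zero_of_mem_Sset hq) 2]
    simp only [powModΔ]
    module
  rw [SemiconjBy, add_mul, mul_assoc B, Quaternion.star_mul_self, Quaternion.star_eq_two_re_sub,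
    mul_add, mul_sub, mul_sub, Quaternion.mul_coe_eq_smul, Quaternion.mul_coe_eq_smul,
    mul_smul_comm, Quaternion.normSq_eq_norm_mul_self, ← sq] at h
  rw [SemiconjBy, mul_add, ← mul_assoc, hsq, sub_mul, smul_mul_assoc, smul_mul_assoc, one_mul,
    add_mul, mul_assoc q B γ]
  linear_combination (norm := module) h

variable {f g : ℕ → Quat} {R : ℝ}

theorem ConvOn.exists_mem_Sset_semiconjBy_pev (hf : ConvOn f R) {γ : Quat} (hγ : ‖γ‖ < R) :
    ∃ q ∈ Sset γ, SemiconjBy (pev f q) γ q := by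
  by_cases hreal : star γ = γ
  · refine ⟨γ, mem_Sset_self γ, ?_⟩
    rw [Quaternion.star_eq_self] at hreal
    rw [hreal]
    exact (Quaternion.coe_commute _ _).symm
  obtain ⟨A, B, hAB⟩ := hf.exists_pev_eq_add_mul hγ hreal
  obtain ⟨q, hqS, hqP⟩ := exists_mem_Sset_semiconjBy (A + B * star γ) γ
  exact ⟨q, hqS, by rw [hAB q hqS]; exact semiconjBy_add_mul_of_mem_Sset hqS hqP⟩

theorem exists_mem_Sset_of_mem_Vset_scoef (hf : ConvOn f R) (hg : ConvOn g R) {β : Quat}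
    (hβ : β ∈ Vset (scoef f g) R) : ∃ α ∈ Vset f R ∪ Vset g R, β ∈ Sset α := by
  by_cases hF : pev f β = 0
  · exact ⟨β, Or.inl ⟨hβ.1, hF⟩, mem_Sset_self β⟩
  set p := (pev f β)⁻¹ * β * pev f β
  have hp : p ∈ Sset β := by simpa [p] using mul_mul_inv_mem_Sset (inv_ne_zero hF) β
  have hβp : SemiconjBy (pev f β) p β := by
    simp only [SemiconjBy, p, mul_assoc, mul_inv_cancel_left₀ hF]
  have hgp : pev f β * pev g p = 0 := (pev_scoef_of_semiconjBy hf hg hβ.1 hβp).symm.trans hβ.2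
  exact ⟨p, Or.inr ⟨hp.2 ▸ hβ.1, (mul_eq_zero.mp hgp).resolve_left hF⟩, mem_Sset_comm.mp hp⟩

theorem mem_Vset_scoef_of_mem_Vset_left (hf : ConvOn f R) (hg : ConvOn g R) {α : Quat}
    (hα : α ∈ Vset f R) : α ∈ Vset (scoef f g) R := by
  have hαα : SemiconjBy (pev f α) α α := by rw [hα.2]; exact SemiconjBy.zero_left α α
  exact ⟨hα.1, by rw [pev_scoef_of_semiconjBy hf hg hα.1 hαα, hα.2, zero_mul]⟩

theorem exists_mem_Vset_scoef_of_mem_Vset_right (hf : ConvOn f R) (hg : ConvOn g R) {γ : Quat}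
    (hγ : γ ∈ Vset g R) : ∃ q ∈ Vset (scoef f g) R, γ ∈ Sset q := by
  obtain ⟨q, hqS, hq⟩ := hf.exists_mem_Sset_semiconjBy_pev hγ.1
  refine ⟨q, ⟨hqS.2 ▸ hγ.1, ?_⟩, mem_Sset_comm.mp hqS⟩
  rw [pev_scoef_of_semiconjBy hf hg (hqS.2 ▸ hγ.1) hq, hγ.2, mul_zero]

end Zeros

theorem stmt12_general (f g : ℕ → Quat) (R : ℝ)
    (hf : ConvOn f R) (hg : ConvOn g R) :
    (⋃ α ∈ Vset (scoef f g) R, Sset α) = ⋃ α ∈ Vset f R ∪ Vset g R, Sset α ∧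
    Vset (scoef f g) R ⊆ ⋃ α ∈ Vset f R ∪ Vset g R, Sset α := by
  have hclasses : (⋃ α ∈ Vset (scoef f g) R, Sset α) = ⋃ α ∈ Vset f R ∪ Vset g R, Sset α := by
    refine subset_antisymm (biUnion_Sset_subset fun β hβ => ?_) (biUnion_Sset_subset ?_)
    · exact exists_mem_Sset_of_mem_Vset_scoef hf hg hβ
    · rintro α (hα | hα)
      · exact ⟨α, mem_Vset_scoef_of_mem_Vset_left hf hg hα, mem_Sset_self α⟩
      · exact exists_mem_Vset_scoef_of_mem_Vset_right hf hg hα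
  exact ⟨hclasses, fun β hβ => hclasses ▸ Set.mem_biUnion hβ (mem_Sset_self β)⟩

/-- Zeros of a star product: the union of the conjugacy classes of the zeros of
`f * g` equals the union of the conjugacy classes of the zeros of `f` and of `g`;
in particular `V(f*g)` is contained in the latter union. -/
theorem stmt12 (f g : ℕ → Quat) (R : ℝ) (hR : 0 < R)
    (hf : ConvOn f R) (hg : ConvOn g R) :
    (⋃ α ∈ Vset (scoef f g) R, Sset α) = ⋃ α ∈ Vset f R ∪ Vset g R, Sset α ∧
    Vset (scoef f g) R ⊆ ⋃ α ∈ Vset f R ∪ Vset g R, Sset α :=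
  stmt12_general f g R hf hg
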